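/- arXiv:2511.10884 — 2 statements merged into one kernel-verified Lean document; each statement's English description precedes it below -/
import Mathlib

section
/- Let H be a Hilbert space, φ : H → ℝ Fréchet differentiable and λ-convex, and suppose X_{n+1} satisfies X_{n+1} = X_n − (τ/2)(∇φ(X_{n+1}) + ∇φ(X_n)) with τ > 0. Then for any ξ ∈ H: ⟨∇φ(X_n), ξ − X_{n+1}⟩ ≤ φ(ξ) − φ(X_{n+1}) + (τ/2)(‖∇φ(X_n)‖² − ‖∇φ(X_{n+1})‖²) − (λ/2)‖X_n − X_{n+1}‖² − (λ/2)‖ξ − X_n‖². -/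
/-!
Split `⟪∇φ X₀, ξ - X₁⟫` as `⟪∇φ X₀, ξ - X₀⟫ + ⟪∇φ X₁, X₀ - X₁⟫ + ⟪∇φ X₀ - ∇φ X₁, X₀ - X₁⟫`.
The first two terms are bounded by the tangent-line inequality of the `λ`-convex `φ` at `X₀`
and at `X₁` (obtained from the convexity of `φ - λ/2 ‖·‖²` restricted to a segment). Since the
trapezoidal step makes `X₀ - X₁` a multiple of `∇φ X₁ + ∇φ X₀`, the last term is exactly
`τ/2 (‖∇φ X₀‖² - ‖∇φ X₁‖²)`.
-/

open RealInnerProductSpace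

theorem ConvexOn.add_fderiv_sub_le {E : Type*} [NormedAddCommGroup E] [NormedSpace ℝ E]
    {s : Set E} {f : E → ℝ} {f' : E →L[ℝ] ℝ} {x y : E}
    (hf : ConvexOn ℝ s f) (hx : x ∈ s) (hy : y ∈ s) (hfx : HasFDerivAt f f' x) :
    f x + f' (y - x) ≤ f y := by
  have hline := hf.comp_affineMap (AffineMap.lineMap (k := ℝ) x y)
  have hderiv : HasDerivAt (f ∘ AffineMap.lineMap x y) (f' (y - x)) (0 : ℝ) := by
    have hfx' : HasFDerivAt f f' (AffineMap.lineMap x y (0 : ℝ)) := by simpa using hfx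
    exact hfx'.comp_hasDerivAt 0 AffineMap.hasDerivAt_lineMap
  have := hline.le_slope_of_hasDerivAt (by simpa using hx) (by simpa using hy) one_pos hderiv
  simp only [slope_def_field, Function.comp_apply, AffineMap.lineMap_apply_zero,
    AffineMap.lineMap_apply_one, sub_zero, div_one] at this
  linarith

theorem StrongConvexOn.add_inner_add_le_of_hasGradientAt {H : Type*} [NormedAddCommGroup H]
    [InnerProductSpace ℝ H] [CompleteSpace H] {s : Set H} {m : ℝ} {f : H → ℝ} {f' x y : H}
    (hf : StrongConvexOn s m f) (hx : x ∈ s) (hy : y ∈ s) (hfx : HasGradientAt f f' x) :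
    f x + ⟪f', y - x⟫ + m / 2 * ‖y - x‖ ^ 2 ≤ f y := by
  have hψ := (strongConvexOn_iff_convex.mp hf).add_fderiv_sub_le hx hy
    (hfx.hasFDerivAt.sub ((hasStrictFDerivAt_norm_sq x).hasFDerivAt.const_mul (m / 2)))
  have hnorm : ‖y‖ ^ 2 = ‖x‖ ^ 2 + 2 * ⟪x, y - x⟫ + ‖y - x‖ ^ 2 := by
    rw [← norm_add_sq_real, add_sub_cancel]
  simp only [sub_apply, InnerProductSpace.toDual_apply_apply,
    smul_apply, coe_innerSL_apply, nsmul_eq_mul, smul_eq_mul] at hψ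
  rw [hnorm] at hψ
  linarith

theorem EVI_helper_general
    {H : Type*} [NormedAddCommGroup H] [InnerProductSpace ℝ H] [CompleteSpace H]
    (lam τ : ℝ)
    (φ : H → ℝ) (g : H → H) (hg : ∀ x, HasGradientAt φ (g x) x)
    (hconv : ∀ x y : H, ∀ t ∈ Set.Icc (0:ℝ) 1,
      φ ((1 - t) • x + t • y) ≤
        (1 - t) * φ x + t * φ y - (lam / 2) * t * (1 - t) * ‖x - y‖ ^ 2)
    (X₀ X₁ : H)
    (himp : X₁ = X₀ - (τ / 2) • (g X₁ + g X₀)) :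
    ∀ ξ : H,
      ⟪g X₀, ξ - X₁⟫ ≤
        φ ξ - φ X₁ + (τ / 2) * (‖g X₀‖ ^ 2 - ‖g X₁‖ ^ 2) -
          (lam / 2) * ‖X₀ - X₁‖ ^ 2 - (lam / 2) * ‖ξ - X₀‖ ^ 2 := by
  intro ξ
  have hφ : StrongConvexOn Set.univ lam φ := by
    refine ⟨convex_univ, fun x _ y _ a b ha hb hab => ?_⟩
    obtain rfl : a = 1 - b := eq_sub_of_add_eq hab
    have := hconv x y b ⟨hb, by linarith⟩
    simp only [smul_eq_mul]
    linarith
  have h₀ := hφ.add_inner_add_le_of_hasGradientAt (y := ξ) trivial trivial (hg X₀)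
  have h₁ := hφ.add_inner_add_le_of_hasGradientAt (y := X₀) trivial trivial (hg X₁)
  have hstep : X₀ - X₁ = (τ / 2) • (g X₁ + g X₀) :=
    sub_eq_of_eq_add' (eq_sub_iff_add_eq.mp himp).symm
  have hgap : ⟪g X₀ - g X₁, X₀ - X₁⟫ = τ / 2 * (‖g X₀‖ ^ 2 - ‖g X₁‖ ^ 2) := by
    rw [hstep, inner_smul_right, inner_sub_left, inner_add_right, inner_add_right,
      real_inner_self_eq_norm_sq, real_inner_self_eq_norm_sq, real_inner_comm (g X₀)]
    ring
  rw [← sub_add_sub_cancel ξ X₀ X₁, inner_add_right (𝕜 := ℝ)]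
  linarith [inner_sub_left (𝕜 := ℝ) (g X₀) (g X₁) (X₀ - X₁)]

theorem EVI_helper
    {H : Type*} [NormedAddCommGroup H] [InnerProductSpace ℝ H] [CompleteSpace H]
    (lam τ : ℝ) (hτ : 0 < τ)
    (φ : H → ℝ) (g : H → H) (hg : ∀ x, HasGradientAt φ (g x) x)
    (hconv : ∀ x y : H, ∀ t ∈ Set.Icc (0:ℝ) 1,
      φ ((1 - t) • x + t • y) ≤
        (1 - t) * φ x + t * φ y - (lam / 2) * t * (1 - t) * ‖x - y‖ ^ 2)
    (X₀ X₁ : H)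
    (himp : X₁ = X₀ - (τ / 2) • (g X₁ + g X₀)) :
    ∀ ξ : H,
      ⟪g X₀, ξ - X₁⟫ ≤
        φ ξ - φ X₁ + (τ / 2) * (‖g X₀‖ ^ 2 - ‖g X₁‖ ^ 2) -
          (lam / 2) * ‖X₀ - X₁‖ ^ 2 - (lam / 2) * ‖ξ - X₀‖ ^ 2 :=
  EVI_helper_general lam τ φ g hg hconv X₀ X₁ himp
end

section
/- Under the hypotheses of the previous statement (λ ≥ 0, ∇φ L-Lipschitz, 0 < τ ≤ 1/L, trapezoidal step X_{n+1} = X_n − (τ/2)(∇φ(X_{n+1}) + ∇φ(X_n)) arising as minimizer of the trapezoidal variational problem), the gradient norm decays geometrically: (1 + λτ(2 − Lτ))‖∇φ(X_{n+1})‖² ≤ ‖∇φ(X_n)‖². -/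
open RealInnerProductSpace Set

/-!
Write `a = ∇φ(X₀)` and `b = ∇φ(X₁)`; the trapezoidal step is `X₀ - X₁ = (τ/2)(a + b)`.
The gradient of a `λ`-convex function is `λ`-strongly monotone, and `⟪a - b, a + b⟫ = ‖a‖² - ‖b‖²`,
so `λ (τ/2) ‖a + b‖² ≤ ‖a‖² - ‖b‖²`. On the other side, the Lipschitz bound
`‖a - b‖ ≤ (Lτ/2) ‖a + b‖`, the parallelogram law and `‖b‖ ≤ ‖a‖` (from the first inequality, as
`λ ≥ 0`) give `‖a + b‖² ≥ 2 (2 - Lτ) ‖b‖²`.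
-/

section

variable {E : Type*} [NormedAddCommGroup E]

lemma ConvexOn.fderiv_apply_sub_le [NormedSpace ℝ E] {f : E → ℝ} {f' : E →L[ℝ] ℝ} {x : E}
    (hf : ConvexOn ℝ univ f) (hx : HasFDerivAt f f' x) (y : E) : f' (y - x) ≤ f y - f x := by
  let ℓ : ℝ →ᵃ[ℝ] E := AffineMap.lineMap x y
  have hline : ConvexOn ℝ univ (f ∘ ℓ) := hf.comp_affineMap ℓ
  have hderiv : HasDerivAt (f ∘ ℓ) (f' (y - x)) 0 :=
    hx.comp_hasDerivAt_of_eq (0 : ℝ) AffineMap.hasDerivAt_lineMap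
      (AffineMap.lineMap_apply_zero x y).symm
  simpa [slope_def_field, ℓ] using
    hline.le_slope_of_hasDerivAt (mem_univ 0) (mem_univ 1) one_pos hderiv

variable [InnerProductSpace ℝ E]

lemma strongConvexOn_univ_of_forall_mem_Icc {f : E → ℝ} {m : ℝ}
    (h : ∀ x y : E, ∀ t ∈ Icc (0 : ℝ) 1,
      f ((1 - t) • x + t • y) ≤ (1 - t) * f x + t * f y - (m / 2) * t * (1 - t) * ‖x - y‖ ^ 2) :
    StrongConvexOn univ m f := by
  refine ⟨convex_univ, fun x _ y _ a b ha hb hab => ?_⟩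
  obtain rfl : a = 1 - b := by linarith
  have := h x y b ⟨hb, by linarith⟩
  simp only [smul_eq_mul]
  linarith

lemma two_mul_two_sub_mul_norm_sq_le_norm_add_sq {a b : E} {s : ℝ} (hs : 0 ≤ s)
    (hba : ‖b‖ ≤ ‖a‖) (h : ‖a - b‖ ≤ s / 2 * ‖a + b‖) :
    2 * (2 - s) * ‖b‖ ^ 2 ≤ ‖a + b‖ ^ 2 := by
  have hpar := parallelogram_law_with_norm ℝ a b
  have hsub : ‖a - b‖ ^ 2 ≤ (s / 2) ^ 2 * ‖a + b‖ ^ 2 := by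
    rw [← mul_pow]; exact pow_le_pow_left₀ (norm_nonneg _) h 2
  have hb : ‖b‖ ^ 2 ≤ ‖a‖ ^ 2 := pow_le_pow_left₀ (norm_nonneg _) hba 2
  have h4 : 4 * ‖b‖ ^ 2 ≤ (1 + s ^ 2 / 4) * ‖a + b‖ ^ 2 := by nlinarith
  rcases le_total s 2 with hs2 | hs2
  -- `8 - (2 - s) (4 + s²) = s ((s - 1)² + 3) ≥ 0`
  · nlinarith [mul_le_mul_of_nonneg_left h4 (sub_nonneg.2 hs2),
      mul_nonneg hs (mul_nonneg (add_nonneg (sq_nonneg (s - 1)) zero_le_three) (sq_nonneg ‖a + b‖))]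
  · nlinarith [sq_nonneg ‖b‖, sq_nonneg ‖a + b‖]

variable [CompleteSpace E] {f : E → ℝ} {m : ℝ}

lemma StrongConvexOn.inner_gradient_add_le {f' x : E} (hf : StrongConvexOn univ m f)
    (hx : HasGradientAt f f' x) (y : E) : ⟪f', y - x⟫ + m / 2 * ‖y - x‖ ^ 2 ≤ f y - f x := by
  have hψ := (strongConvexOn_iff_convex.1 hf).fderiv_apply_sub_le
    (hx.hasFDerivAt.sub ((hasStrictFDerivAt_norm_sq x).hasFDerivAt.const_mul (m / 2))) y
  simp only [sub_apply, smul_apply, InnerProductSpace.toDual_apply_apply, innerSL_apply_apply,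
    smul_eq_mul, nsmul_eq_mul] at hψ
  have hsq : ‖y - x‖ ^ 2 = ‖y‖ ^ 2 - ‖x‖ ^ 2 - 2 * ⟪x, y - x⟫ := by
    rw [norm_sub_sq_real, inner_sub_right, real_inner_self_eq_norm_sq, real_inner_comm]; ring
  rw [hsq]
  linarith

lemma StrongConvexOn.mul_norm_sub_sq_le_inner_gradient_sub {f'x f'y x y : E}
    (hf : StrongConvexOn univ m f) (hx : HasGradientAt f f'x x) (hy : HasGradientAt f f'y y) :
    m * ‖x - y‖ ^ 2 ≤ ⟪f'x - f'y, x - y⟫ := by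
  have hxy := hf.inner_gradient_add_le hx y
  have hyx := hf.inner_gradient_add_le hy x
  rw [norm_sub_rev, ← neg_sub x y, inner_neg_right] at hxy
  rw [inner_sub_left]
  linarith

end

theorem trapezoid_gradient_geometric_decay_general
    {H : Type*} [NormedAddCommGroup H] [InnerProductSpace ℝ H] [CompleteSpace H]
    (lam τ L : ℝ) (hlam : 0 ≤ lam) (hL : 0 < L) (hτ : 0 < τ)
    (φ : H → ℝ) (g : H → H) (hg : ∀ x, HasGradientAt φ (g x) x)
    (hconv : ∀ x y : H, ∀ t ∈ Set.Icc (0:ℝ) 1,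
      φ ((1 - t) • x + t • y) ≤
        (1 - t) * φ x + t * φ y - (lam / 2) * t * (1 - t) * ‖x - y‖ ^ 2)
    (hLip : ∀ x y : H, ‖g x - g y‖ ≤ L * ‖x - y‖)
    (X₀ X₁ : H)
    (himp : X₁ = X₀ - (τ / 2) • (g X₁ + g X₀)) :
    (1 + lam * τ * (2 - L * τ)) * ‖g X₁‖ ^ 2 ≤ ‖g X₀‖ ^ 2 := by
  set a := g X₀
  set b := g X₁
  have hτ2 : 0 < τ / 2 := by positivity
  have hstep : X₀ - X₁ = (τ / 2) • (a + b) := by rw [himp, add_comm]; abel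
  have hmono := (strongConvexOn_univ_of_forall_mem_Icc hconv).mul_norm_sub_sq_le_inner_gradient_sub
    (hg X₀) (hg X₁)
  have hinner : ⟪a - b, a + b⟫ = ‖a‖ ^ 2 - ‖b‖ ^ 2 := by
    rw [inner_sub_left, inner_add_right, inner_add_right, real_inner_comm a b,
      real_inner_self_eq_norm_sq, real_inner_self_eq_norm_sq]; ring
  rw [hstep, norm_smul, real_inner_smul_right, hinner, Real.norm_of_nonneg hτ2.le] at hmono
  have hdecay : lam * (τ / 2) * ‖a + b‖ ^ 2 ≤ ‖a‖ ^ 2 - ‖b‖ ^ 2 :=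
    le_of_mul_le_mul_left (by linear_combination hmono) hτ2
  have hba : ‖b‖ ≤ ‖a‖ := by
    refine (pow_le_pow_iff_left₀ (norm_nonneg _) (norm_nonneg _) two_ne_zero).1 ?_
    linarith [mul_nonneg (mul_nonneg hlam hτ2.le) (sq_nonneg ‖a + b‖)]
  have hlip : ‖a - b‖ ≤ L * τ / 2 * ‖a + b‖ :=
    (hLip X₀ X₁).trans_eq (by rw [hstep, norm_smul, Real.norm_of_nonneg hτ2.le]; ring)
  have hlower := two_mul_two_sub_mul_norm_sq_le_norm_add_sq (by positivity) hba hlip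
  linear_combination hdecay + lam * (τ / 2) * hlower

theorem trapezoid_gradient_geometric_decay
    {H : Type*} [NormedAddCommGroup H] [InnerProductSpace ℝ H] [CompleteSpace H]
    (lam τ L : ℝ) (hlam : 0 ≤ lam) (hL : 0 < L) (hτ : 0 < τ) (hτL : τ ≤ 1 / L)
    (φ : H → ℝ) (g : H → H) (hg : ∀ x, HasGradientAt φ (g x) x)
    (hconv : ∀ x y : H, ∀ t ∈ Set.Icc (0:ℝ) 1,
      φ ((1 - t) • x + t • y) ≤
        (1 - t) * φ x + t * φ y - (lam / 2) * t * (1 - t) * ‖x - y‖ ^ 2)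
    (hLip : ∀ x y : H, ‖g x - g y‖ ≤ L * ‖x - y‖)
    (X₀ X₁ : H)
    (hmin : ∀ ξ : H,
      (1 / 2) * (φ X₁ + ⟪g X₀, X₁⟫) + (1 / (2 * τ)) * ‖X₁ - X₀‖ ^ 2 ≤
      (1 / 2) * (φ ξ + ⟪g X₀, ξ⟫) + (1 / (2 * τ)) * ‖ξ - X₀‖ ^ 2)
    (himp : X₁ = X₀ - (τ / 2) • (g X₁ + g X₀)) :
    (1 + lam * τ * (2 - L * τ)) * ‖g X₁‖ ^ 2 ≤ ‖g X₀‖ ^ 2 :=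
  trapezoid_gradient_geometric_decay_general lam τ L hlam hL hτ φ g hg hconv hLip X₀ X₁ himp
end
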